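/- A tree T of order at least 3 satisfies γt(T) = 2γ(T) if and only if T has a dominating set S such that (a) every vertex of S is a support vertex of T, and (b) S is a packing in T. -/

import Mathlib

open SimpleGraph

namespace TotalDom

variable {V : Type*}

/-- The closed neighborhood `N[v]` of a vertex. -/
def cnbr (G : SimpleGraph V) (v : V) : Set V := insert v (G.neighborSet v)

/-- `S` is a dominating set: every vertex outside `S` has a neighbor in `S`. -/
def IsDomSet (G : SimpleGraph V) (S : Set V) : Prop := ∀ v ∉ S, ∃ u ∈ S, G.Adj u v

/-- `S` is a total dominating set: every vertex has a neighbor in `S`. -/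
def IsTotalDomSet (G : SimpleGraph V) (S : Set V) : Prop := ∀ v : V, ∃ u ∈ S, G.Adj u v

/-- The domination number `γ(G)`. -/
noncomputable def domNum (G : SimpleGraph V) : ℕ :=
  sInf {n | ∃ S : Set V, IsDomSet G S ∧ S.ncard = n}

/-- The total domination number `γₜ(G)`. -/
noncomputable def totalDomNum (G : SimpleGraph V) : ℕ :=
  sInf {n | ∃ S : Set V, IsTotalDomSet G S ∧ S.ncard = n}

/-- A minimum dominating set (γ-set). -/
def IsMinDomSet (G : SimpleGraph V) (S : Set V) : Prop := IsDomSet G S ∧ S.ncard = domNum G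

/-- `S` is a packing: closed neighborhoods of distinct members are disjoint. -/
def IsPacking (G : SimpleGraph V) (S : Set V) : Prop :=
  S.Pairwise fun u v => Disjoint (cnbr G u) (cnbr G v)

/-- `M(v)`: neighbors of `v` having a neighbor outside `N[v]`. -/
def Mset (G : SimpleGraph V) (v : V) : Set V :=
  {u | G.Adj v u ∧ ∃ w, G.Adj u w ∧ w ∉ cnbr G v}

/-- `D(v)`: neighbors `u` of `v` that are not true twins of `v` with `N[u] ⊆ N[v]`. -/
def Dset (G : SimpleGraph V) (v : V) : Set V :=
  {u | G.Adj v u ∧ cnbr G u ≠ cnbr G v ∧ cnbr G u ⊆ cnbr G v}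

/-- `T(v)`: `v` together with its true twins. -/
def Tset (G : SimpleGraph V) (v : V) : Set V := {u | cnbr G u = cnbr G v}

/-- A non-isolated vertex `v` is special if no `u ∈ M(v)` satisfies `D(v) ⊆ N(u)`. -/
def Special (G : SimpleGraph V) (v : V) : Prop :=
  (G.neighborSet v).Nonempty ∧ ¬ ∃ u ∈ Mset G v, Dset G v ⊆ G.neighborSet u

/-- An `S(G)`-set: a set of special vertices containing exactly one vertex from each
true-twin equivalence class of special vertices. -/
def IsSGSet (G : SimpleGraph V) (S : Set V) : Prop :=
  (∀ u ∈ S, Special G u) ∧ ∀ v, Special G v → ∃! u, u ∈ S ∧ u ∈ Tset G v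

/-- `G` has no isolated vertices. -/
def NoIsolated (G : SimpleGraph V) : Prop := ∀ v : V, ∃ u, G.Adj v u

/-- `G` contains no induced copy of `H`. -/
def Free {α : Type*} (H : SimpleGraph α) (G : SimpleGraph V) : Prop := IsEmpty (H ↪g G)

/-- `H₁`: a 6-cycle plus one chord between vertices at distance two along the cycle. -/
def H1 : SimpleGraph (Fin 6) := cycleGraph 6 ⊔ fromEdgeSet {s(0, 2)}

/-- `H₂`: a 6-cycle `x₁x₂x₃x₄x₅x₆` plus the chords `x₂x₆` and `x₃x₅`. -/
def H2 : SimpleGraph (Fin 6) := cycleGraph 6 ⊔ fromEdgeSet {s(1, 5), s(2, 4)}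

/-- A leaf: a vertex of degree one. -/
def IsLeaf (G : SimpleGraph V) (v : V) : Prop := ∃! u, G.Adj v u

/-- A support vertex: a vertex adjacent to a leaf. -/
def IsSupport (G : SimpleGraph V) (v : V) : Prop := ∃ u, G.Adj v u ∧ IsLeaf G u

/-- `sup(G)`: the set of support vertices. -/
def supSet (G : SimpleGraph V) : Set V := {v | IsSupport G v}

/-!
A γ-set `S` together with one neighbour of each of its vertices is a total dominating set, so
`γₜ ≤ 2γ`. Equality forces every γ-set to be extremal in two ways. If the closed neighbourhoods
of two vertices of `S` meet, a single vertex can serve as the neighbour of both. If some `v ∈ S`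
is not a support vertex, each neighbour `u` of `v` has a neighbour `w ≠ v` dominated by some
`s ∈ S \ {v}`; in a tree these `s` are distinct for distinct `u`, so choosing `w` as the partner
of `s` dominates all of `N(v)`, and `v` can be replaced by a single neighbour. Either way
`γₜ < 2γ`. Conversely, a total dominating set contains every support vertex and a neighbour of
it; for a packing `S` of support vertices these `2|S|` vertices are distinct, so
`γₜ ≥ 2|S| ≥ 2γ`.
-/

variable {G : SimpleGraph V}

lemma mem_cnbr {v x : V} : x ∈ cnbr G v ↔ x = v ∨ G.Adj v x := Iff.rfl

lemma self_mem_cnbr (v : V) : v ∈ cnbr G v := Set.mem_insert v _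

lemma mem_cnbr_of_adj {v x : V} (h : G.Adj v x) : x ∈ cnbr G v := Set.mem_insert_of_mem v h

lemma IsPacking.eq_of_mem_cnbr {S : Set V} (hS : IsPacking G S) {a b x : V} (ha : a ∈ S)
    (hb : b ∈ S) (hxa : x ∈ cnbr G a) (hxb : x ∈ cnbr G b) : a = b :=
  by_contra fun hab => Set.disjoint_left.mp (hS ha hb hab) hxa hxb

lemma domNum_le_ncard {S : Set V} (hS : IsDomSet G S) : domNum G ≤ S.ncard :=
  Nat.sInf_le ⟨S, hS, rfl⟩

lemma totalDomNum_le_ncard {S : Set V} (hS : IsTotalDomSet G S) : totalDomNum G ≤ S.ncard :=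
  Nat.sInf_le ⟨S, hS, rfl⟩

lemma exists_isMinDomSet (G : SimpleGraph V) : ∃ S, IsMinDomSet G S := by
  obtain ⟨S, hS, hcard⟩ := Nat.sInf_mem (s := {n | ∃ S : Set V, IsDomSet G S ∧ S.ncard = n})
    ⟨_, Set.univ, fun v hv => (hv (Set.mem_univ v)).elim, rfl⟩
  exact ⟨S, hS, hcard⟩

lemma NoIsolated.exists_isTotalDomSet_ncard_eq (hG : NoIsolated G) :
    ∃ S, IsTotalDomSet G S ∧ S.ncard = totalDomNum G :=
  Nat.sInf_mem (s := {n | ∃ S : Set V, IsTotalDomSet G S ∧ S.ncard = n})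
    ⟨_, Set.univ, fun v => ⟨(hG v).choose, trivial, (hG v).choose_spec.symm⟩, rfl⟩

lemma IsDomSet.isTotalDomSet_union_image {S : Set V} (hS : IsDomSet G S) {f : V → V}
    (hf : ∀ s ∈ S, G.Adj s (f s)) : IsTotalDomSet G (S ∪ f '' S) := by
  intro x
  by_cases hx : x ∈ S
  · exact ⟨f x, Or.inr ⟨x, hx, rfl⟩, (hf x hx).symm⟩
  · obtain ⟨u, hu, hadj⟩ := hS x hx
    exact ⟨u, Or.inl hu, hadj⟩

lemma IsSupport.mem_of_isTotalDomSet {D : Set V} {v : V} (hv : IsSupport G v)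
    (hD : IsTotalDomSet G D) : v ∈ D := by
  obtain ⟨ℓ, hvℓ, hℓ⟩ := hv
  obtain ⟨d, hdD, hdℓ⟩ := hD ℓ
  rwa [hℓ.unique hvℓ.symm hdℓ.symm]

lemma _root_.SimpleGraph.IsAcyclic.not_adj_of_adj_of_adj (hG : G.IsAcyclic) {a b c : V}
    (hab : G.Adj a b) (hbc : G.Adj b c) : ¬G.Adj a c := by
  classical
  exact fun hac => hG.cliqueFree le_rfl {a, b, c} (is3Clique_triple_iff.mpr ⟨hab, hac, hbc⟩)

lemma _root_.SimpleGraph.IsAcyclic.eq_of_paths_length_three (hG : G.IsAcyclic)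
    {v u w s u' w' : V} (h₁ : G.Adj v u) (h₂ : G.Adj u w) (h₃ : G.Adj w s)
    (h₁' : G.Adj v u') (h₂' : G.Adj u' w') (h₃' : G.Adj w' s)
    (hvw : v ≠ w) (hvs : v ≠ s) (hus : u ≠ s) (hvw' : v ≠ w') (hu's : u' ≠ s) : u = u' := by
  let p : G.Path v s :=
    ⟨.cons h₁ (.cons h₂ (.cons h₃ .nil)), by simp [Walk.isPath_def, *, h₁.ne, h₂.ne, h₃.ne]⟩
  let p' : G.Path v s :=
    ⟨.cons h₁' (.cons h₂' (.cons h₃' .nil)), by simp [Walk.isPath_def, *, h₁'.ne, h₂'.ne, h₃'.ne]⟩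
  have h : [v, u, w, s] = [v, u', w', s] :=
    congrArg (fun p : G.Path v s => p.1.support) ((hG.subsingleton_path v s).elim p p')
  exact (List.cons.inj (List.cons.inj h).2).1

lemma NoIsolated.exists_partner_of_injOn (hG : NoIsolated G) {A : Set V} {s w : V → V}
    (hinj : Set.InjOn s A) (hadj : ∀ u ∈ A, G.Adj (s u) (w u)) :
    ∃ g : V → V, (∀ x, G.Adj x (g x)) ∧ ∀ u ∈ A, g (s u) = w u := by
  classical
  refine ⟨fun x => if h : ∃ u ∈ A, s u = x then w h.choose else (hG x).choose,
    fun x => ?_, fun u hu => ?_⟩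
  · dsimp only
    split_ifs with h
    · obtain ⟨hA, hx⟩ := h.choose_spec
      have := hadj _ hA
      rwa [hx] at this
    · exact (hG x).choose_spec
  · have h : ∃ u' ∈ A, s u' = s u := ⟨u, hu, rfl⟩
    dsimp only
    rw [dif_pos h, hinj h.choose_spec.1 hu h.choose_spec.2]

lemma IsPacking.exists_partner_covering_neighborSet {S : Set V} (hpack : IsPacking G S)
    (hT : G.IsAcyclic) (hG : NoIsolated G) (hS : IsDomSet G S) {v : V} (hv : v ∈ S) (hns : ¬IsSupport G v) :
    ∃ g : V → V, (∀ x, G.Adj x (g x)) ∧ ∀ u, G.Adj v u → ∃ s ∈ S \ {v}, G.Adj u (g s) := by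
  have hW : ∀ u, ∃ w, G.Adj v u → G.Adj u w ∧ w ≠ v := fun u => by
    by_cases hu : G.Adj v u
    · by_contra! h
      exact hns ⟨u, hu, v, hu.symm, fun w hw => (h w).2 hw⟩
    · exact ⟨u, fun h => (hu h).elim⟩
  choose W hW using hW
  have hWv : ∀ u, G.Adj v u → ¬G.Adj v (W u) := fun u hu =>
    hT.not_adj_of_adj_of_adj hu (hW u hu).1
  have hWS : ∀ u, G.Adj v u → W u ∉ S := fun u hu hWu => (hW u hu).2 <|
    (hpack.eq_of_mem_cnbr hv hWu (mem_cnbr_of_adj hu) (mem_cnbr_of_adj (hW u hu).1.symm)).symm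
  have hs : ∀ u, ∃ s, G.Adj v u → s ∈ S ∧ G.Adj s (W u) := fun u => by
    by_cases hu : G.Adj v u
    · obtain ⟨s, hs, hsW⟩ := hS _ (hWS u hu)
      exact ⟨s, fun _ => ⟨hs, hsW⟩⟩
    · exact ⟨u, fun h => (hu h).elim⟩
  choose s hs using hs
  have hsv : ∀ u, G.Adj v u → s u ≠ v := fun u hu h => hWv u hu (h ▸ (hs u hu).2)
  have hsu : ∀ u, G.Adj v u → u ≠ s u := fun u hu h => hsv u hu <|
    hpack.eq_of_mem_cnbr (hs u hu).1 hv (self_mem_cnbr _) (by rw [← h]; exact mem_cnbr_of_adj hu)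
  have hinj : Set.InjOn s (G.neighborSet v) := fun u hu u' hu' h =>
    hT.eq_of_paths_length_three hu (hW u hu).1 (hs u hu).2.symm hu' (hW u' hu').1
      (by rw [h]; exact (hs u' hu').2.symm) (hW u hu).2.symm (hsv u hu).symm (hsu u hu)
      (hW u' hu').2.symm (by rw [h]; exact hsu u' hu')
  obtain ⟨g, hg, hgs⟩ := hG.exists_partner_of_injOn hinj fun u hu => (hs u hu).2
  exact ⟨g, hg, fun u hu => ⟨s u, ⟨(hs u hu).1, hsv u hu⟩, hgs u hu ▸ (hW u hu).1⟩⟩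

section Finite

variable [Finite V]

theorem totalDomNum_le_two_mul_domNum (hG : NoIsolated G) : totalDomNum G ≤ 2 * domNum G := by
  obtain ⟨S, hS, hcard⟩ := exists_isMinDomSet G
  choose f hf using hG
  calc totalDomNum G ≤ (S ∪ f '' S).ncard :=
        totalDomNum_le_ncard (IsDomSet.isTotalDomSet_union_image hS fun s _ => hf s)
    _ ≤ S.ncard + (f '' S).ncard := Set.ncard_union_le _ _
    _ ≤ 2 * domNum G := by have := Set.ncard_image_le (f := f) (s := S); omega

lemma IsPacking.two_mul_ncard_le {S D : Set V} (hpack : IsPacking G S)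
    (hsup : ∀ v ∈ S, IsSupport G v) (hD : IsTotalDomSet G D) : 2 * S.ncard ≤ D.ncard := by
  choose d hdD hd using hD
  have hinj : Set.InjOn d S := fun s hs s' hs' h =>
    hpack.eq_of_mem_cnbr hs hs' (mem_cnbr_of_adj (hd s).symm) (h ▸ mem_cnbr_of_adj (hd s').symm)
  have hdisj : Disjoint S (d '' S) := by
    rw [Set.disjoint_right]
    rintro _ ⟨s, hs, rfl⟩ hds
    exact (hd s).ne (hpack.eq_of_mem_cnbr hds hs (self_mem_cnbr _) (mem_cnbr_of_adj (hd s).symm))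
  have hsub : S ∪ d '' S ⊆ D :=
    Set.union_subset (fun s hs => (hsup s hs).mem_of_isTotalDomSet fun y => ⟨d y, hdD y, hd y⟩)
      (Set.image_subset_iff.mpr fun s _ => hdD s)
  calc 2 * S.ncard = (S ∪ d '' S).ncard := by rw [Set.ncard_union_eq hdisj, hinj.ncard_image]; ring
    _ ≤ D.ncard := Set.ncard_le_ncard hsub

lemma totalDomNum_lt_of_adj_of_mem_cnbr (hG : NoIsolated G) {S : Set V} (hS : IsDomSet G S)
    {a b x : V} (ha : a ∈ S) (hb : b ∈ S) (hab : a ≠ b) (hax : G.Adj a x) (hbx : x ∈ cnbr G b) :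
    totalDomNum G < 2 * S.ncard := by
  choose f hf using hG
  have hD : IsTotalDomSet G (S ∪ insert x (f '' (S \ {a, b}))) := by
    intro y
    by_cases hy : y ∈ S
    · by_cases hya : y = a
      · exact ⟨x, Or.inr (Set.mem_insert _ _), hya ▸ hax.symm⟩
      by_cases hyb : y = b
      · subst hyb
        rcases mem_cnbr.mp hbx with rfl | hyx
        · exact ⟨a, Or.inl ha, hax⟩
        · exact ⟨x, Or.inr (Set.mem_insert _ _), hyx.symm⟩
      exact ⟨f y, Or.inr (Or.inr ⟨y, ⟨hy, by simp [hya, hyb]⟩, rfl⟩), (hf y).symm⟩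
    · obtain ⟨u, hu, hadj⟩ := hS y hy
      exact ⟨u, Or.inl hu, hadj⟩
  have hpair : (S \ {a, b}).ncard = S.ncard - 2 := by
    rw [Set.ncard_sdiff (Set.insert_subset ha (Set.singleton_subset_iff.mpr hb)),
      Set.ncard_pair hab]
  have htwo : 2 ≤ S.ncard := Set.ncard_pair hab ▸
    Set.ncard_le_ncard (Set.insert_subset ha (Set.singleton_subset_iff.mpr hb))
  calc totalDomNum G ≤ _ := totalDomNum_le_ncard hD
    _ ≤ S.ncard + ((f '' (S \ {a, b})).ncard + 1) :=
        (Set.ncard_union_le _ _).trans (Nat.add_le_add_left (Set.ncard_insert_le _ _) _)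
    _ < 2 * S.ncard := by have := Set.ncard_image_le (f := f) (s := S \ {a, b}); omega

theorem totalDomNum_lt_of_not_isPacking (hG : NoIsolated G) {S : Set V} (hS : IsDomSet G S)
    (hnp : ¬IsPacking G S) : totalDomNum G < 2 * S.ncard := by
  simp only [IsPacking, Set.Pairwise, Set.not_disjoint_iff, not_forall, exists_prop] at hnp
  obtain ⟨a, ha, b, hb, hab, x, hxa, hxb⟩ := hnp
  rcases mem_cnbr.mp hxa with rfl | hax
  · exact totalDomNum_lt_of_adj_of_mem_cnbr hG hS hb ha (Ne.symm hab)
      (mem_cnbr.mp hxb |>.resolve_left hab) (self_mem_cnbr _)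
  · exact totalDomNum_lt_of_adj_of_mem_cnbr hG hS ha hb hab hax hxb

lemma totalDomNum_lt_of_partner_covering_neighborSet {S : Set V} (hS : IsDomSet G S) {v u₀ : V}
    (hv : v ∈ S) (hu₀ : G.Adj v u₀) {g : V → V} (hg : ∀ s, G.Adj s (g s))
    (hcover : ∀ u, G.Adj v u → ∃ s ∈ S \ {v}, G.Adj u (g s)) : totalDomNum G < 2 * S.ncard := by
  have hD : IsTotalDomSet G (S \ {v} ∪ insert u₀ (g '' (S \ {v}))) := by
    intro y
    by_cases hyv : y = v
    · exact ⟨u₀, Or.inr (Set.mem_insert _ _), hyv ▸ hu₀.symm⟩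
    by_cases hy : y ∈ S
    · exact ⟨g y, Or.inr (Or.inr ⟨y, ⟨hy, hyv⟩, rfl⟩), (hg y).symm⟩
    obtain ⟨s, hs, hsy⟩ := hS y hy
    by_cases hsv : s = v
    · obtain ⟨t, ht, hyt⟩ := hcover y (hsv ▸ hsy)
      exact ⟨g t, Or.inr (Or.inr ⟨t, ht, rfl⟩), hyt.symm⟩
    · exact ⟨s, Or.inl ⟨hs, hsv⟩, hsy⟩
  have hdiff : (S \ {v}).ncard = S.ncard - 1 := Set.ncard_sdiff_singleton_of_mem hv
  have hpos : 0 < S.ncard := (Set.ncard_pos (Set.toFinite S)).mpr ⟨v, hv⟩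
  calc totalDomNum G ≤ _ := totalDomNum_le_ncard hD
    _ ≤ (S \ {v}).ncard + ((g '' (S \ {v})).ncard + 1) :=
        (Set.ncard_union_le _ _).trans (Nat.add_le_add_left (Set.ncard_insert_le _ _) _)
    _ < 2 * S.ncard := by have := Set.ncard_image_le (f := g) (s := S \ {v}); omega

theorem totalDomNum_lt_of_not_isSupport (hT : G.IsAcyclic) (hG : NoIsolated G) {S : Set V}
    (hS : IsDomSet G S) (hpack : IsPacking G S) {v : V} (hv : v ∈ S) (hns : ¬IsSupport G v) :
    totalDomNum G < 2 * S.ncard := by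
  obtain ⟨g, hg, hcover⟩ := hpack.exists_partner_covering_neighborSet hT hG hS hv hns
  exact totalDomNum_lt_of_partner_covering_neighborSet hS hv (hG v).choose_spec hg hcover

end Finite

/-- A tree `T` of order at least 3 satisfies `γₜ(T) = 2γ(T)` iff `T` has a dominating set `S`
such that every vertex of `S` is a support vertex of `T` and `S` is a packing in `T`. -/
theorem stmt10 {V : Type*} [Fintype V] (T : SimpleGraph V) (hT : T.IsTree)
    (hcard : 3 ≤ Fintype.card V) :
    totalDomNum T = 2 * domNum T ↔
      ∃ S : Set V, IsDomSet T S ∧ (∀ v ∈ S, IsSupport T v) ∧ IsPacking T S := by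
  have : Nontrivial V := Fintype.one_lt_card_iff_nontrivial.mp (by omega)
  have hG : NoIsolated T := hT.connected.preconnected.exists_adj_of_nontrivial
  have hle := totalDomNum_le_two_mul_domNum hG
  constructor
  · intro hEq
    obtain ⟨S, hS, hSγ⟩ := exists_isMinDomSet T
    have hpack : IsPacking T S := by
      by_contra hnp
      have := totalDomNum_lt_of_not_isPacking hG hS hnp
      omega
    refine ⟨S, hS, fun v hv => by_contra fun hns => ?_, hpack⟩
    have := totalDomNum_lt_of_not_isSupport hT.isAcyclic hG hS hpack hv hns
    omega
  · rintro ⟨S, hS, hsup, hpack⟩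
    obtain ⟨D, hD, hDcard⟩ := hG.exists_isTotalDomSet_ncard_eq
    have := hpack.two_mul_ncard_le hsup hD
    have := domNum_le_ncard hS
    omega

end TotalDom
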